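/- arXiv:2405.08083 — 3 statements merged into one kernel-verified Lean document; each statement's English description precedes it below -/
import Mathlib

section
/- Let a₁, a₂, a₃ be pairwise distinct real numbers and let g be the real symmetric 3×3 matrix with zero diagonal and off-diagonal entries g₁₂ = g₂₁ = (a₁−a₂)/2, g₁₃ = g₃₁ = (a₃−a₁)/2, g₂₃ = g₃₂ = (a₂−a₃)/2. Then all three (real) eigenvalues of g are nonzero, and exactly one eigenvalue has sign opposite to the other two: either g has exactly one positive and two negative eigenvalues, or exactly one negative and two positive eigenvalues. In other words, g defines a nondegenerate quadratic form of Lorentzian signature on ℝ³. -/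
/-!
STATEMENT 3: For pairwise distinct real numbers `a₁, a₂, a₃`, the symmetric 3×3
matrix `g` with zero diagonal and off-diagonal entries `g₁₂ = (a₁−a₂)/2`,
`g₁₃ = (a₃−a₁)/2`, `g₂₃ = (a₂−a₃)/2` has all its (real) eigenvalues nonzero, and
exactly one eigenvalue has sign opposite to the other two: either exactly one
positive and two negative, or exactly one negative and two positive.  In other
words, `g` defines a nondegenerate quadratic form of Lorentzian signature on `ℝ³`.
-/

open Finset

/-- The symmetric part `g` of the matrix `N` arising in the Ward-equation example. -/
noncomputable def wardMetric (a₁ a₂ a₃ : ℝ) : Matrix (Fin 3) (Fin 3) ℝ :=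
  !![0,            (a₁ - a₂)/2, (a₃ - a₁)/2;
     (a₁ - a₂)/2,  0,           (a₂ - a₃)/2;
     (a₃ - a₁)/2,  (a₂ - a₃)/2, 0]

lemma trace_eq_sum_eig {A : Matrix (Fin 3) (Fin 3) ℝ} (hA : A.IsHermitian) :
    A.trace = ∑ i, hA.eigenvalues i := by
  conv_lhs => rw [hA.spectral_theorem]
  rw [Unitary.conjStarAlgAut_apply, Matrix.trace_mul_cycle,
    (Matrix.mem_unitaryGroup_iff').mp (Matrix.IsHermitian.eigenvectorUnitary hA).2,
    Matrix.one_mul, Matrix.trace_diagonal]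
  simp

theorem wardMetric_lorentzian_signature (a₁ a₂ a₃ : ℝ)
    (h₁₂ : a₁ ≠ a₂) (h₂₃ : a₂ ≠ a₃) (h₁₃ : a₁ ≠ a₃)
    (hg : (wardMetric a₁ a₂ a₃).IsHermitian) :
    (∀ i, hg.eigenvalues i ≠ 0) ∧
    (((univ.filter fun i => 0 < hg.eigenvalues i).card = 1 ∧
        (univ.filter fun i => hg.eigenvalues i < 0).card = 2) ∨
      ((univ.filter fun i => hg.eigenvalues i < 0).card = 1 ∧
        (univ.filter fun i => 0 < hg.eigenvalues i).card = 2)) := by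
  set f := hg.eigenvalues with hf
  have hdet : (wardMetric a₁ a₂ a₃).det = ∏ i, f i := by
    simpa using hg.det_eq_prod_eigenvalues
  have hdetval : (wardMetric a₁ a₂ a₃).det =
      2 * ((a₁ - a₂)/2) * ((a₃ - a₁)/2) * ((a₂ - a₃)/2) := by
    simp [wardMetric, Matrix.det_fin_three]; ring
  have hdne : (wardMetric a₁ a₂ a₃).det ≠ 0 := by
    rw [hdetval]
    have h1 : a₁ - a₂ ≠ 0 := sub_ne_zero.mpr h₁₂
    have h2 : a₃ - a₁ ≠ 0 := sub_ne_zero.mpr h₁₃.symm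
    have h3 : a₂ - a₃ ≠ 0 := sub_ne_zero.mpr h₂₃
    positivity
  have hprod : ∏ i, f i ≠ 0 := hdet ▸ hdne
  have hne : ∀ i, f i ≠ 0 := by
    intro i hi
    exact hprod (Finset.prod_eq_zero (mem_univ i) hi)
  have htr : ∑ i, f i = 0 := by
    have := trace_eq_sum_eig hg
    rw [← this]
    simp [wardMetric, Matrix.trace_fin_three]
  refine ⟨hne, ?_⟩
  classical
  have hsplit : (univ.filter fun i => 0 < f i).card +
      (univ.filter fun i => f i < 0).card = 3 := by
    rw [← Finset.card_union_of_disjoint]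
    · have : (univ.filter fun i => 0 < f i) ∪ (univ.filter fun i => f i < 0) = univ := by
        ext i
        simp only [Finset.mem_union, Finset.mem_filter, Finset.mem_univ, true_and]
        rcases lt_trichotomy (f i) 0 with h | h | h
        · simp [h]
        · exact absurd h (hne i)
        · simp [h]
      rw [this]; simp
    · rw [Finset.disjoint_filter]
      intro i _ h1 h2
      exact absurd h1 (not_lt.mpr h2.le)
  have hpos : 1 ≤ (univ.filter fun i => 0 < f i).card := by
    rw [Nat.one_le_iff_ne_zero, Ne, Finset.card_eq_zero, Finset.filter_eq_empty_iff]
    intro h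
    have : ∑ i, f i < 0 := by
      apply Finset.sum_neg
      · intro i _
        exact lt_of_le_of_ne (not_lt.mp (h (mem_univ i))) (hne i)
      · exact univ_nonempty
    linarith
  have hneg : 1 ≤ (univ.filter fun i => f i < 0).card := by
    rw [Nat.one_le_iff_ne_zero, Ne, Finset.card_eq_zero, Finset.filter_eq_empty_iff]
    intro h
    have : 0 < ∑ i, f i := by
      apply Finset.sum_pos
      · intro i _
        exact lt_of_le_of_ne (not_lt.mp (h (mem_univ i))) (Ne.symm (hne i))
      · exact univ_nonempty
    linarith
  omega
end

section
/- Let V be a complex vector space, let a, a′ be distinct nonzero complex numbers, and let r, s be distinct complex numbers with r, s ∉ {0, a, a′}. For c, p, q, b ∈ V define the V-valued rational function f(z) = c + p/(z−a) + q/(z−a′) + b/z. Then for any X, Y, Z ∈ V there exist unique c, p, q, b ∈ V such that f(r) = X, f(s) = 0, f′(s) = −p/(s−a)² − q/(s−a′)² − b/s² = Y, and c = Z. Moreover the solution is given explicitly by c = Z and p = ((r−a)(s−a)²/(a(a−a′)))·( (r(r−a′)/(r−s)²)·X − (s(s−a′)/(r−s))·Y − Z ), q = ((r−a′)(s−a′)²/(a′(a′−a)))·(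 (r(r−a)/(r−s)²)·X − (s(s−a)/(r−s))·Y − Z ), b = (r·s²/(a·a′))·( ((r−a)(r−a′)/(r−s)²)·X − ((s−a)(s−a′)/(r−s))·Y − Z ). -/
/-!
STATEMENT 6: Unique solvability of the boundary conditions for the 2-form component
of the higher Lax connection in the Ward-equation example.  For the `V`-valued
rational ansatz `f(z) = c + p/(z−a) + q/(z−a′) + b/z`, the conditions `f(r) = X`,
`f(s) = 0`, `f′(s) = Y` and `c = Z` determine `c, p, q, b` uniquely, and the
solution is given by the explicit formulas below.
-/

/-- The `V`-valued rational ansatz `f(z) = c + p/(z−a) + q/(z−a′) + b/z`. -/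
noncomputable def ratAnsatz {V : Type*} [AddCommGroup V] [Module ℂ V]
    (a a' : ℂ) (c p q b : V) (z : ℂ) : V :=
  c + (z - a)⁻¹ • p + (z - a')⁻¹ • q + z⁻¹ • b

set_option maxHeartbeats 2000000 in
theorem ward_B_boundary_conditions_unique_solution
    {V : Type*} [AddCommGroup V] [Module ℂ V]
    (a a' r s : ℂ) (ha : a ≠ 0) (ha' : a' ≠ 0) (haa' : a ≠ a') (hrs : r ≠ s)
    (hr0 : r ≠ 0) (hra : r ≠ a) (hra' : r ≠ a')
    (hs0 : s ≠ 0) (hsa : s ≠ a) (hsa' : s ≠ a')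
    (X Y Z : V) (c p q b : V) :
    (ratAnsatz a a' c p q b r = X ∧
     ratAnsatz a a' c p q b s = 0 ∧
     -(((s - a) ^ 2)⁻¹ • p) - ((s - a') ^ 2)⁻¹ • q - (s ^ 2)⁻¹ • b = Y ∧
     c = Z)
    ↔
    (c = Z ∧
     p = ((r - a) * (s - a) ^ 2 / (a * (a - a'))) •
        ((r * (r - a') / (r - s) ^ 2) • X - (s * (s - a') / (r - s)) • Y - Z) ∧
     q = ((r - a') * (s - a') ^ 2 / (a' * (a' - a))) •
        ((r * (r - a) / (r - s) ^ 2) • X - (s * (s - a) / (r - s)) • Y - Z) ∧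
     b = (r * s ^ 2 / (a * a')) •
        (((r - a) * (r - a') / (r - s) ^ 2) • X - ((s - a) * (s - a') / (r - s)) • Y - Z)) := by
  have hra0 : r - a ≠ 0 := sub_ne_zero.mpr hra
  have hra'0 : r - a' ≠ 0 := sub_ne_zero.mpr hra'
  have hsa0 : s - a ≠ 0 := sub_ne_zero.mpr hsa
  have hsa'0 : s - a' ≠ 0 := sub_ne_zero.mpr hsa'
  have hrs0 : r - s ≠ 0 := sub_ne_zero.mpr hrs
  have haa'0 : a - a' ≠ 0 := sub_ne_zero.mpr haa'
  have ha'a0 : a' - a ≠ 0 := sub_ne_zero.mpr (Ne.symm haa')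
  have hkP : (s*(s-a')*(a*(a-a')*(r-s)^2)) ≠ 0 :=
    mul_ne_zero (mul_ne_zero hs0 hsa'0)
      (mul_ne_zero (mul_ne_zero ha haa'0) (pow_ne_zero 2 hrs0))
  have hkQ : (s*(s-a)*(a'*(a'-a)*(r-s)^2)) ≠ 0 :=
    mul_ne_zero (mul_ne_zero hs0 hsa0)
      (mul_ne_zero (mul_ne_zero ha' ha'a0) (pow_ne_zero 2 hrs0))
  have hkB : ((s-a)*(s-a')*(a*a'*(r-s)^2)) ≠ 0 :=
    mul_ne_zero (mul_ne_zero hsa0 hsa'0)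
      (mul_ne_zero (mul_ne_zero ha ha') (pow_ne_zero 2 hrs0))
  constructor
  · rintro ⟨h1, h2, h3, h4⟩
    unfold ratAnsatz at h1 h2
    have H1 : (r*(r-a)*(r-a')) • X
        = (r*(r-a)*(r-a')) • c + (r*(r-a')) • p + (r*(r-a)) • q + ((r-a)*(r-a')) • b := by
      rw [← h1]; match_scalars <;> field_simp <;> ring
    have H2 : (s*(s-a)*(s-a')) • c + (s*(s-a')) • p + (s*(s-a)) • q + ((s-a)*(s-a')) • b
        = 0 := by
      have h2' : (s*(s-a)*(s-a')) • (c + (s - a)⁻¹ • p + (s - a')⁻¹ • q + s⁻¹ • b)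
          = (s*(s-a)*(s-a')) • c + (s*(s-a')) • p + (s*(s-a)) • q + ((s-a)*(s-a')) • b := by
        match_scalars <;> field_simp <;> ring
      rw [← h2', h2, smul_zero]
    have H3 : (s^2*(s-a)^2*(s-a')^2) • Y
        = -((s^2*(s-a')^2) • p) - (s^2*(s-a)^2) • q - ((s-a)^2*(s-a')^2) • b := by
      rw [← h3]; match_scalars <;> field_simp <;> ring
    have keyP : (s*(s-a')*(a*(a-a')*(r-s)^2)) • p
        = (s*(s-a')*((r-a)*(s-a)^2)) •
            ((r*(r-a')) • X - ((r-s)*(s*(s-a'))) • Y - ((r-s)^2) • Z) := by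
      linear_combination (norm := module)
        (-(s*(s-a')*(s-a)^2) : ℂ) • H1 + (-((s-a)*(r-a)*(2*r*s-s^2-r*a')) : ℂ) • H2
        + ((r-a)*(r-s) : ℂ) • H3 + (-(s*(s-a')*(r-a)*(s-a)^2*(r-s)^2) : ℂ) • h4
    have keyQ : (s*(s-a)*(a'*(a'-a)*(r-s)^2)) • q
        = (s*(s-a)*((r-a')*(s-a')^2)) •
            ((r*(r-a)) • X - ((r-s)*(s*(s-a))) • Y - ((r-s)^2) • Z) := by
      linear_combination (norm := module)
        (-(s*(s-a)*(s-a')^2) : ℂ) • H1 + (-((s-a')*(r-a')*(2*r*s-s^2-r*a)) : ℂ) • H2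
        + ((r-a')*(r-s) : ℂ) • H3 + (-(s*(s-a)*(r-a')*(s-a')^2*(r-s)^2) : ℂ) • h4
    have keyB : ((s-a)*(s-a')*(a*a'*(r-s)^2)) • b
        = ((s-a)*(s-a')*(r*s^2)) •
            (((r-a)*(r-a')) • X - ((r-s)*((s-a)*(s-a'))) • Y - ((r-s)^2) • Z) := by
      linear_combination (norm := module)
        (-((s-a)*(s-a')*s^2) : ℂ) • H1 + (-(r*s*(2*r*s-s^2-r*a-r*a'+a*a')) : ℂ) • H2
        + (r*(r-s) : ℂ) • H3 + (-((s-a)*(s-a')*r*s^2*(r-s)^2) : ℂ) • h4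
    refine ⟨h4, ?_, ?_, ?_⟩
    · calc p = (s*(s-a')*(a*(a-a')*(r-s)^2))⁻¹ • ((s*(s-a')*(a*(a-a')*(r-s)^2)) • p) :=
            (inv_smul_smul₀ hkP p).symm
        _ = (s*(s-a')*(a*(a-a')*(r-s)^2))⁻¹ • ((s*(s-a')*((r-a)*(s-a)^2)) •
              ((r*(r-a')) • X - ((r-s)*(s*(s-a'))) • Y - ((r-s)^2) • Z)) := by rw [keyP]
        _ = _ := by match_scalars <;> field_simp <;> ring
    · calc q = (s*(s-a)*(a'*(a'-a)*(r-s)^2))⁻¹ • ((s*(s-a)*(a'*(a'-a)*(r-s)^2)) • q) :=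
            (inv_smul_smul₀ hkQ q).symm
        _ = (s*(s-a)*(a'*(a'-a)*(r-s)^2))⁻¹ • ((s*(s-a)*((r-a')*(s-a')^2)) •
              ((r*(r-a)) • X - ((r-s)*(s*(s-a))) • Y - ((r-s)^2) • Z)) := by rw [keyQ]
        _ = _ := by match_scalars <;> field_simp <;> ring
    · calc b = ((s-a)*(s-a')*(a*a'*(r-s)^2))⁻¹ • (((s-a)*(s-a')*(a*a'*(r-s)^2)) • b) :=
            (inv_smul_smul₀ hkB b).symm
        _ = ((s-a)*(s-a')*(a*a'*(r-s)^2))⁻¹ • (((s-a)*(s-a')*(r*s^2)) •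
              (((r-a)*(r-a')) • X - ((r-s)*((s-a)*(s-a'))) • Y - ((r-s)^2) • Z)) := by rw [keyB]
        _ = _ := by match_scalars <;> field_simp <;> ring
  · rintro ⟨hc, hp, hq, hb⟩
    have kp : (s*(s-a')*(a*(a-a')*(r-s)^2)) • p
        = (s*(s-a')*((r-a)*(s-a)^2)) •
            ((r*(r-a')) • X - ((r-s)*(s*(s-a'))) • Y - ((r-s)^2) • Z) := by
      rw [hp]; match_scalars <;> field_simp <;> ring
    have kq : (s*(s-a)*(a'*(a'-a)*(r-s)^2)) • q
        = (s*(s-a)*((r-a')*(s-a')^2)) •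
            ((r*(r-a)) • X - ((r-s)*(s*(s-a))) • Y - ((r-s)^2) • Z) := by
      rw [hq]; match_scalars <;> field_simp <;> ring
    have kb : ((s-a)*(s-a')*(a*a'*(r-s)^2)) • b
        = ((s-a)*(s-a')*(r*s^2)) •
            (((r-a)*(r-a')) • X - ((r-s)*((s-a)*(s-a'))) • Y - ((r-s)^2) • Z) := by
      rw [hb]; match_scalars <;> field_simp <;> ring
    have T1 : (s*(s-a)*(s-a')*(a*a'*(a-a')*(r-s)^2)*(r*(r-a)*(r-a'))) • X
        = (s*(s-a)*(s-a')*(a*a'*(a-a')*(r-s)^2)*(r*(r-a)*(r-a'))) • c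
          + (s*(s-a)*(s-a')*(a*a'*(a-a')*(r-s)^2)*(r*(r-a'))) • p
          + (s*(s-a)*(s-a')*(a*a'*(a-a')*(r-s)^2)*(r*(r-a))) • q
          + (s*(s-a)*(s-a')*(a*a'*(a-a')*(r-s)^2)*((r-a)*(r-a'))) • b := by
      linear_combination (norm := module)
        (-(a'*(s-a)*r*(r-a')) : ℂ) • kp + (a*(s-a')*r*(r-a) : ℂ) • kq
        + (-(s*(a-a')*(r-a)*(r-a')) : ℂ) • kb
        + ((-(a'*(s-a)*r*(r-a')))*(s*(s-a')*(r-a)*(s-a)^2*(r-s)^2)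
           + (a*(s-a')*r*(r-a))*(s*(s-a)*(r-a')*(s-a')^2*(r-s)^2)
           + (-(s*(a-a')*(r-a)*(r-a')))*((s-a)*(s-a')*r*s^2*(r-s)^2) : ℂ) • hc
    have T2 : (a*a'*(a-a')*(r-s)^2*(s*(s-a)*(s-a'))) • c
          + (a*a'*(a-a')*(r-s)^2*(s*(s-a'))) • p
          + (a*a'*(a-a')*(r-s)^2*(s*(s-a))) • q
          + (a*a'*(a-a')*(r-s)^2*((s-a)*(s-a'))) • b = 0 := by
      linear_combination (norm := module)
        (a' : ℂ) • kp + (-a : ℂ) • kq + ((a-a') : ℂ) • kb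
        + (a'*(s*(s-a')*(r-a)*(s-a)^2*(r-s)^2)
           + (-a)*(s*(s-a)*(r-a')*(s-a')^2*(r-s)^2)
           + (a-a')*((s-a)*(s-a')*r*s^2*(r-s)^2) : ℂ) • hc
    have T3 : (a*a'*(a-a')*(r-s)^2*(s^2*(s-a)^2*(s-a')^2)) • Y
        = -((a*a'*(a-a')*(r-s)^2*(s^2*(s-a')^2)) • p)
          - (a*a'*(a-a')*(r-s)^2*(s^2*(s-a)^2)) • q
          - (a*a'*(a-a')*(r-s)^2*((s-a)^2*(s-a')^2)) • b := by
      linear_combination (norm := module)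
        (a'*s*(s-a') : ℂ) • kp + (-(a*s*(s-a)) : ℂ) • kq + ((a-a')*(s-a)*(s-a') : ℂ) • kb
        + ((a'*s*(s-a'))*(s*(s-a')*(r-a)*(s-a)^2*(r-s)^2)
           + (-(a*s*(s-a)))*(s*(s-a)*(r-a')*(s-a')^2*(r-s)^2)
           + ((a-a')*(s-a)*(s-a'))*((s-a)*(s-a')*r*s^2*(r-s)^2) : ℂ) • hc
    have hN1 : (s*(s-a)*(s-a')*(a*a'*(a-a')*(r-s)^2)*(r*(r-a)*(r-a'))) ≠ 0 :=
      mul_ne_zero (mul_ne_zero (mul_ne_zero (mul_ne_zero hs0 hsa0) hsa'0)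
        (mul_ne_zero (mul_ne_zero (mul_ne_zero ha ha') haa'0) (pow_ne_zero 2 hrs0)))
        (mul_ne_zero (mul_ne_zero hr0 hra0) hra'0)
    have hN2 : (a*a'*(a-a')*(r-s)^2*(s*(s-a)*(s-a'))) ≠ 0 :=
      mul_ne_zero (mul_ne_zero (mul_ne_zero (mul_ne_zero ha ha') haa'0) (pow_ne_zero 2 hrs0))
        (mul_ne_zero (mul_ne_zero hs0 hsa0) hsa'0)
    have hN3 : (a*a'*(a-a')*(r-s)^2*(s^2*(s-a)^2*(s-a')^2)) ≠ 0 :=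
      mul_ne_zero (mul_ne_zero (mul_ne_zero (mul_ne_zero ha ha') haa'0) (pow_ne_zero 2 hrs0))
        (mul_ne_zero (mul_ne_zero (pow_ne_zero 2 hs0) (pow_ne_zero 2 hsa0)) (pow_ne_zero 2 hsa'0))
    refine ⟨?_, ?_, ?_, hc⟩
    · unfold ratAnsatz
      calc c + (r - a)⁻¹ • p + (r - a')⁻¹ • q + r⁻¹ • b
          = (s*(s-a)*(s-a')*(a*a'*(a-a')*(r-s)^2)*(r*(r-a)*(r-a')))⁻¹ •
              ((s*(s-a)*(s-a')*(a*a'*(a-a')*(r-s)^2)*(r*(r-a)*(r-a'))) • c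
              + (s*(s-a)*(s-a')*(a*a'*(a-a')*(r-s)^2)*(r*(r-a'))) • p
              + (s*(s-a)*(s-a')*(a*a'*(a-a')*(r-s)^2)*(r*(r-a))) • q
              + (s*(s-a)*(s-a')*(a*a'*(a-a')*(r-s)^2)*((r-a)*(r-a'))) • b) := by
            match_scalars <;> field_simp <;> ring
        _ = (s*(s-a)*(s-a')*(a*a'*(a-a')*(r-s)^2)*(r*(r-a)*(r-a')))⁻¹ •
              ((s*(s-a)*(s-a')*(a*a'*(a-a')*(r-s)^2)*(r*(r-a)*(r-a'))) • X) := by rw [← T1]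
        _ = X := inv_smul_smul₀ hN1 X
    · unfold ratAnsatz
      calc c + (s - a)⁻¹ • p + (s - a')⁻¹ • q + s⁻¹ • b
          = (a*a'*(a-a')*(r-s)^2*(s*(s-a)*(s-a')))⁻¹ •
              ((a*a'*(a-a')*(r-s)^2*(s*(s-a)*(s-a'))) • c
              + (a*a'*(a-a')*(r-s)^2*(s*(s-a'))) • p
              + (a*a'*(a-a')*(r-s)^2*(s*(s-a))) • q
              + (a*a'*(a-a')*(r-s)^2*((s-a)*(s-a'))) • b) := by
            match_scalars <;> field_simp <;> ring
        _ = 0 := by rw [T2, smul_zero]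
    · calc -(((s - a) ^ 2)⁻¹ • p) - ((s - a') ^ 2)⁻¹ • q - (s ^ 2)⁻¹ • b
          = (a*a'*(a-a')*(r-s)^2*(s^2*(s-a)^2*(s-a')^2))⁻¹ •
              (-((a*a'*(a-a')*(r-s)^2*(s^2*(s-a')^2)) • p)
              - (a*a'*(a-a')*(r-s)^2*(s^2*(s-a)^2)) • q
              - (a*a'*(a-a')*(r-s)^2*((s-a)^2*(s-a')^2)) • b) := by
            match_scalars <;> field_simp <;> ring
        _ = (a*a'*(a-a')*(r-s)^2*(s^2*(s-a)^2*(s-a')^2))⁻¹ •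
              ((a*a'*(a-a')*(r-s)^2*(s^2*(s-a)^2*(s-a')^2)) • Y) := by rw [← T3]
        _ = Y := inv_smul_smul₀ hN3 Y
end

section
/- Let 𝔤 be a complex Lie algebra equipped with a symmetric bilinear form B : 𝔤 × 𝔤 → ℂ which is invariant, i.e. B([x,y],z) + B(y,[x,z]) = 0 for all x, y, z ∈ 𝔤. On W = 𝔤 × 𝔤 × 𝔤 define the bracket [(x₀,x,y),(x₀′,x′,y′)] = ([x₀,x₀′], [x,x′], [x,y′] + [y,x′]) and the bilinear pairing ⟨⟨(x₀,x,y),(x₀′,x′,y′)⟩⟩ = B(x₀,x₀′) − B(x,x′) + B(x,y′) + B(y,x′). Then: (i) W with this bracket is a Lie algebra; (ii) the subspaces 𝔤◇ = {(x₀,0,y) : x₀, y ∈ 𝔤} and 𝔥◇ = {(0,0,y) : y ∈ 𝔤} are Lie subalgebras of W with 𝔥◇ ⊆ 𝔤◇ and [𝔤◇, 𝔥◇] ⊆ 𝔥◇; (iii) the pairing ⟨⟨·,·⟩⟩ vanishes identically on 𝔤◇ × 𝔥◇ (isotropy); (iv) ⟨⟨·,·⟩⟩ is symmetric, and it is nondegenerate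 whenever B is nondegenerate; (v) if 𝔤 is finite-dimensional of dimension n, then dim 𝔤◇ = 2n = (2/3)·dim W and dim 𝔥◇ = n = (1/3)·dim W. -/
/-!
STATEMENT 8: The defect Lie algebra `W = 𝔤 × 𝔤 × 𝔤` of the toy example (a simple
pole and a double pole), with bracket
`[(x₀,x,y),(x₀′,x′,y′)] = ([x₀,x₀′], [x,x′], [x,y′] + [y,x′])` and pairing
`⟨⟨(x₀,x,y),(x₀′,x′,y′)⟩⟩ = B(x₀,x₀′) − B(x,x′) + B(x,y′) + B(y,x′)`:
(i) `W` is a Lie algebra; (ii) `𝔤◇ = {(x₀,0,y)}` and `𝔥◇ = {(0,0,y)}` are Lie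
subalgebras with `𝔥◇ ⊆ 𝔤◇` and `[𝔤◇,𝔥◇] ⊆ 𝔥◇`; (iii) the pairing vanishes on
`𝔤◇ × 𝔥◇`; (iv) the pairing is symmetric, and nondegenerate if `B` is;
(v) `dim 𝔤◇ = 2n = (2/3)·dim W` and `dim 𝔥◇ = n = (1/3)·dim W` when `dim 𝔤 = n`.
-/

open Module

variable {𝔤 : Type*} [LieRing 𝔤] [LieAlgebra ℂ 𝔤]

/-- The bracket of the defect Lie algebra `W = 𝔤 × 𝔤 × 𝔤` of the toy example. -/
def toyBracket (u v : 𝔤 × 𝔤 × 𝔤) : 𝔤 × 𝔤 × 𝔤 :=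
  (⁅u.1, v.1⁆, ⁅u.2.1, v.2.1⁆, ⁅u.2.1, v.2.2⁆ + ⁅u.2.2, v.2.1⁆)

/-- The defect pairing `⟨⟨·,·⟩⟩_ω` of the toy example. -/
def toyPairing (B : 𝔤 →ₗ[ℂ] 𝔤 →ₗ[ℂ] ℂ) (u v : 𝔤 × 𝔤 × 𝔤) : ℂ :=
  B u.1 v.1 - B u.2.1 v.2.1 + B u.2.1 v.2.2 + B u.2.2 v.2.1

/-- The subspace `𝔤◇ = {(x₀, 0, y)}` of `W`. -/
def toyGDiamond (𝔤 : Type*) [LieRing 𝔤] [LieAlgebra ℂ 𝔤] : Submodule ℂ (𝔤 × 𝔤 × 𝔤) :=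
  (⊤ : Submodule ℂ 𝔤).prod ((⊥ : Submodule ℂ 𝔤).prod (⊤ : Submodule ℂ 𝔤))

/-- The subspace `𝔥◇ = {(0, 0, y)}` of `W`. -/
def toyHDiamond (𝔤 : Type*) [LieRing 𝔤] [LieAlgebra ℂ 𝔤] : Submodule ℂ (𝔤 × 𝔤 × 𝔤) :=
  (⊥ : Submodule ℂ 𝔤).prod ((⊥ : Submodule ℂ 𝔤).prod (⊤ : Submodule ℂ 𝔤))

noncomputable def toyGEquiv (𝔤 : Type*) [LieRing 𝔤] [LieAlgebra ℂ 𝔤] :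
    toyGDiamond 𝔤 ≃ₗ[ℂ] 𝔤 × 𝔤 where
  toFun u := (u.1.1, u.1.2.2)
  map_add' _ _ := rfl
  map_smul' _ _ := rfl
  invFun p := ⟨(p.1, 0, p.2), by simp [toyGDiamond, Submodule.mem_prod]⟩
  left_inv := by
    rintro ⟨⟨a, b, c⟩, hm⟩
    have hb : b = 0 := hm.2.1
    ext <;> simp [hb]
  right_inv _ := rfl

noncomputable def toyHEquiv (𝔤 : Type*) [LieRing 𝔤] [LieAlgebra ℂ 𝔤] :
    toyHDiamond 𝔤 ≃ₗ[ℂ] 𝔤 where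
  toFun u := u.1.2.2
  map_add' _ _ := rfl
  map_smul' _ _ := rfl
  invFun y := ⟨(0, 0, y), by simp [toyHDiamond, Submodule.mem_prod]⟩
  left_inv := by
    rintro ⟨⟨a, b, c⟩, hm⟩
    have ha : a = 0 := hm.1
    have hb : b = 0 := hm.2.1
    ext <;> simp [ha, hb]
  right_inv _ := rfl

theorem toy_defect_crossed_module_properties
    (B : 𝔤 →ₗ[ℂ] 𝔤 →ₗ[ℂ] ℂ)
    (hBsymm : ∀ x y : 𝔤, B x y = B y x)
    (hBinv : ∀ x y z : 𝔤, B ⁅x, y⁆ z + B y ⁅x, z⁆ = 0) :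
    -- (i) `W` with this bracket is a Lie algebra
    ((∀ u u' v : 𝔤 × 𝔤 × 𝔤, toyBracket (u + u') v = toyBracket u v + toyBracket u' v) ∧
     (∀ u v v' : 𝔤 × 𝔤 × 𝔤, toyBracket u (v + v') = toyBracket u v + toyBracket u v') ∧
     (∀ (t : ℂ) (u v : 𝔤 × 𝔤 × 𝔤), toyBracket (t • u) v = t • toyBracket u v) ∧
     (∀ (t : ℂ) (u v : 𝔤 × 𝔤 × 𝔤), toyBracket u (t • v) = t • toyBracket u v) ∧
     (∀ u : 𝔤 × 𝔤 × 𝔤, toyBracket u u = 0) ∧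
     (∀ u v w : 𝔤 × 𝔤 × 𝔤,
        toyBracket u (toyBracket v w) =
          toyBracket (toyBracket u v) w + toyBracket v (toyBracket u w))) ∧
    -- (ii) `𝔤◇` and `𝔥◇` are Lie subalgebras, `𝔥◇ ⊆ 𝔤◇`, and `[𝔤◇, 𝔥◇] ⊆ 𝔥◇`
    ((∀ u v, u ∈ toyGDiamond 𝔤 → v ∈ toyGDiamond 𝔤 → toyBracket u v ∈ toyGDiamond 𝔤) ∧
     (∀ u v, u ∈ toyHDiamond 𝔤 → v ∈ toyHDiamond 𝔤 → toyBracket u v ∈ toyHDiamond 𝔤) ∧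
     toyHDiamond 𝔤 ≤ toyGDiamond 𝔤 ∧
     (∀ u v, u ∈ toyGDiamond 𝔤 → v ∈ toyHDiamond 𝔤 → toyBracket u v ∈ toyHDiamond 𝔤)) ∧
    -- (iii) isotropy: the pairing vanishes on `𝔤◇ × 𝔥◇`
    (∀ u v, u ∈ toyGDiamond 𝔤 → v ∈ toyHDiamond 𝔤 → toyPairing B u v = 0) ∧
    -- (iv) the pairing is symmetric, and nondegenerate whenever `B` is
    ((∀ u v : 𝔤 × 𝔤 × 𝔤, toyPairing B u v = toyPairing B v u) ∧
     ((∀ x : 𝔤, (∀ y : 𝔤, B x y = 0) → x = 0) →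
       ∀ u : 𝔤 × 𝔤 × 𝔤, (∀ v : 𝔤 × 𝔤 × 𝔤, toyPairing B u v = 0) → u = 0)) ∧
    -- (v) dimensions: `dim 𝔤◇ = 2n = (2/3)·dim W`, `dim 𝔥◇ = n = (1/3)·dim W`
    (FiniteDimensional ℂ 𝔤 →
      (finrank ℂ (toyGDiamond 𝔤) = 2 * finrank ℂ 𝔤 ∧
       finrank ℂ (toyHDiamond 𝔤) = finrank ℂ 𝔤 ∧
       finrank ℂ (𝔤 × 𝔤 × 𝔤) = 3 * finrank ℂ 𝔤 ∧
       3 * finrank ℂ (toyGDiamond 𝔤) = 2 * finrank ℂ (𝔤 × 𝔤 × 𝔤) ∧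
       3 * finrank ℂ (toyHDiamond 𝔤) = finrank ℂ (𝔤 × 𝔤 × 𝔤))) := by
  have memG : ∀ u : 𝔤 × 𝔤 × 𝔤, u ∈ toyGDiamond 𝔤 ↔ u.2.1 = 0 := by
    intro u; simp [toyGDiamond, Submodule.mem_prod]
  have memH : ∀ u : 𝔤 × 𝔤 × 𝔤, u ∈ toyHDiamond 𝔤 ↔ u.1 = 0 ∧ u.2.1 = 0 := by
    intro u; simp [toyHDiamond, Submodule.mem_prod]
  refine ⟨⟨?_, ?_, ?_, ?_, ?_, ?_⟩, ⟨?_, ?_, ?_, ?_⟩, ?_, ⟨?_, ?_⟩, ?_⟩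
  · intro u u' v
    simp only [toyBracket, Prod.fst_add, Prod.snd_add, add_lie, lie_add, Prod.mk_add_mk]
    ext <;> simp <;> abel
  · intro u v v'
    simp only [toyBracket, Prod.fst_add, Prod.snd_add, add_lie, lie_add, Prod.mk_add_mk]
    ext <;> simp <;> abel
  · intro t u v
    simp only [toyBracket, Prod.smul_fst, Prod.smul_snd, smul_lie, lie_smul, Prod.smul_mk,
      smul_add]
  · intro t u v
    simp only [toyBracket, Prod.smul_fst, Prod.smul_snd, smul_lie, lie_smul, Prod.smul_mk,
      smul_add]
  · intro u
    simp only [toyBracket, lie_self]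
    ext <;> simp
    rw [← lie_skew]; abel
  · intro u v w
    simp only [toyBracket]
    ext <;> simp only [Prod.fst_add, Prod.snd_add, lie_add, add_lie, lie_lie] <;> abel
  · intro u v hu hv
    rw [memG] at *
    simp [toyBracket, hu, hv]
  · intro u v hu hv
    rw [memH] at *
    simp [toyBracket, hu.1, hu.2, hv.1, hv.2]
  · intro u hu
    rw [memH] at hu
    rw [memG]
    exact hu.2
  · intro u v hu hv
    rw [memG] at hu
    rw [memH] at *
    simp [toyBracket, hu, hv.1, hv.2]
  · intro u v hu hv
    rw [memG] at hu
    rw [memH] at hv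
    simp [toyPairing, hu, hv.1, hv.2]
  · intro u v
    simp only [toyPairing, hBsymm u.1, hBsymm u.2.1, hBsymm u.2.2]
    ring
  · intro hB u hu
    have h1 : u.1 = 0 := by
      apply hB; intro y
      have := hu (y, 0, 0)
      simpa [toyPairing] using this
    have h3 : u.2.1 = 0 := by
      apply hB; intro y
      have := hu (0, 0, y)
      simpa [toyPairing] using this
    have h2 : u.2.2 = 0 := by
      apply hB; intro y
      have := hu (0, y, 0)
      simpa [toyPairing, h3, hBsymm u.2.2 y] using this
    ext <;> simp [h1, h2, h3]
  · intro _
    have hG : finrank ℂ (toyGDiamond 𝔤) = 2 * finrank ℂ 𝔤 := by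
      rw [(toyGEquiv 𝔤).finrank_eq, finrank_prod]; ring
    have hH : finrank ℂ (toyHDiamond 𝔤) = finrank ℂ 𝔤 := (toyHEquiv 𝔤).finrank_eq
    have hW : finrank ℂ (𝔤 × 𝔤 × 𝔤) = 3 * finrank ℂ 𝔤 := by
      rw [finrank_prod, finrank_prod]; ring
    exact ⟨hG, hH, hW, by rw [hG, hW]; ring, by rw [hH, hW]⟩
end
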